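/- Let F be a finite field, r ≤ m positive integers, and A an r × m matrix over F of rank r. For n ∈ ℕ let S'(n) = {s : Fin m → Fⁿ : ∀ i, Σ_j A i j • s j = 0} and let S⁰(n) = {s ∈ S'(n) : finrank of the F-linear span of {s j} equals m − r} be the set of fully dimensional solutions. Then |S⁰(n)| / |S'(n)| → 1 as n → ∞. -/

import Mathlib

/-!
Transposing, a solution `s` is an `n`-tuple of vectors in `K = ker A`, a space of dimension
`m - r`, and `s` is fully dimensional iff that tuple spans `K` (row rank = column rank).
A tuple fails to span `K` iff it lies in the kernel of a nonzero functional; each such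
hyperplane contains a fraction `q⁻ⁿ` of all tuples and there are fewer than `|K|` functionals,
so the non-spanning tuples make up at most `|K| q⁻ⁿ → 0` of all solutions.
-/

open Filter Module Submodule Set Matrix

section SpanningTuples

variable {F V : Type*} [Field F] [AddCommGroup V] [Module F V] [FiniteDimensional F V]

lemma Module.Dual.natCard_ker_mul_natCard_eq {f : Dual F V} (hf : f ≠ 0) :
    Nat.card (LinearMap.ker f) * Nat.card F = Nat.card V := by
  rw [natCard_eq_pow_finrank (K := F), natCard_eq_pow_finrank (K := F) (V := V),
    ← finrank_ker_add_one_of_ne_zero hf, pow_succ]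

variable (F V) in
lemma Module.Dual.natCard_eq : Nat.card (Dual F V) = Nat.card V := by
  rw [natCard_eq_pow_finrank (K := F), natCard_eq_pow_finrank (K := F) (V := V),
    Subspace.dual_finrank_eq]

variable [Finite F]

variable (F V) in
lemma natCard_span_ne_top_mul_le (ι : Type*) [Fintype ι] :
    Nat.card {t : ι → V // span F (range t) ≠ ⊤} * Nat.card F ^ Fintype.card ι ≤
      Nat.card V * Nat.card (ι → V) := by
  classical
  have : Finite V := Module.finite_of_finite F
  have : Fintype (Dual F V) := @Fintype.ofFinite _ (Module.finite_of_finite F)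
  have : ∀ t : {t : ι → V // span F (range t) ≠ ⊤},
      ∃ f : Dual F V, f ≠ 0 ∧ ∀ i, t.1 i ∈ LinearMap.ker f := by
    intro t
    obtain ⟨f, hf, hspan⟩ :=
      exists_dual_map_eq_bot_of_lt_top (lt_top_iff_ne_top.2 t.2) inferInstance
    refine ⟨f, hf, fun i => ?_⟩
    rw [LinearMap.mem_ker, ← mem_bot F, ← hspan]
    exact mem_map_of_mem (subset_span (mem_range_self i))
  choose f hf hker using this
  let Φ := Σ g : {g : Dual F V // g ≠ 0}, ι → LinearMap.ker g.1
  have hinj : Nat.card {t : ι → V // span F (range t) ≠ ⊤} ≤ Nat.card Φ :=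
    Nat.card_le_card_of_injective (fun t => ⟨⟨f t, hf t⟩, fun i => ⟨t.1 i, hker t i⟩⟩)
      fun t₁ t₂ h => Subtype.ext <| funext <| congr_fun <|
        congrArg (fun (x : Φ) i => (x.2 i : V)) h
  calc Nat.card {t : ι → V // span F (range t) ≠ ⊤} * Nat.card F ^ Fintype.card ι
      ≤ Nat.card Φ * Nat.card F ^ Fintype.card ι := Nat.mul_le_mul_right _ hinj
    _ = ∑ g : {g : Dual F V // g ≠ 0}, Nat.card V ^ Fintype.card ι := by
      simp only [Φ, Nat.card_sigma, Finset.sum_mul, Nat.card_fun,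
        Nat.card_eq_fintype_card (α := ι), ← mul_pow]
      exact Finset.sum_congr rfl fun g _ => by rw [Dual.natCard_ker_mul_natCard_eq g.2]
    _ ≤ Nat.card (Dual F V) * Nat.card V ^ Fintype.card ι := by
      rw [Finset.sum_const, smul_eq_mul, Finset.card_univ, ← Nat.card_eq_fintype_card]
      exact Nat.mul_le_mul_right _ (Finite.card_subtype_le _)
    _ = Nat.card V * Nat.card (ι → V) := by
      rw [Dual.natCard_eq, Nat.card_fun, Nat.card_eq_fintype_card (α := ι)]

variable (F V) in
theorem tendsto_natCard_span_eq_top_div_natCard :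
    Tendsto (fun n : ℕ =>
      (Nat.card {t : Fin n → V // span F (range t) = ⊤} : ℝ) / Nat.card (Fin n → V))
      atTop (nhds 1) := by
  have : Fintype V := @Fintype.ofFinite _ (Module.finite_of_finite F)
  have hq : 1 < Nat.card F := Finite.one_lt_card
  set u : ℕ → ℝ := fun n =>
    (Nat.card {t : Fin n → V // span F (range t) ≠ ⊤} : ℝ) / Nat.card (Fin n → V)
  have hcard_pos (n : ℕ) : (0 : ℝ) < Nat.card (Fin n → V) := by
    exact_mod_cast Nat.card_pos
  have hcompl (n : ℕ) :
      (Nat.card {t : Fin n → V // span F (range t) = ⊤} : ℝ) / Nat.card (Fin n → V) =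
        1 - u n := by
    rw [eq_sub_iff_add_eq, ← add_div, div_eq_one_iff_eq (hcard_pos n).ne', ← Nat.cast_add,
      Nat.cast_inj]
    simp only [Nat.card_eq_fintype_card, Fintype.card_subtype_compl]
    have := Fintype.card_subtype_le fun t : Fin n → V => span F (range t) = ⊤
    omega
  have hu_le (n : ℕ) : u n ≤ Nat.card V * ((Nat.card F : ℝ)⁻¹) ^ n := by
    have h := natCard_span_ne_top_mul_le F V (Fin n)
    rw [Fintype.card_fin] at h
    rw [div_le_iff₀ (hcard_pos n), inv_pow, mul_right_comm, ← div_eq_mul_inv,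
      le_div_iff₀ (by positivity)]
    exact_mod_cast h
  have hu : Tendsto u atTop (nhds 0) := by
    refine squeeze_zero (fun n => by positivity) hu_le ?_
    simpa using (tendsto_pow_atTop_nhds_zero_of_lt_one (by positivity)
      (inv_lt_one_of_one_lt₀ (by exact_mod_cast hq))).const_mul (Nat.card V : ℝ)
  have h := (tendsto_const_nhds (x := (1 : ℝ))).sub hu
  rw [sub_zero] at h
  exact h.congr fun n => (hcompl n).symm

end SpanningTuples

section LinearSystems

variable {F : Type*} [Field F] {ι κ ν : Type*} [Fintype κ]

lemma Matrix.finrank_ker_mulVecLin (A : Matrix ι κ F) :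
    finrank F (LinearMap.ker A.mulVecLin) = Fintype.card κ - A.rank := by
  have := LinearMap.finrank_range_add_finrank_ker A.mulVecLin
  rw [finrank_fintype_fun_eq_card] at this
  rw [Matrix.rank]
  omega

lemma Matrix.forall_sum_smul_eq_zero_iff (A : Matrix ι κ F) (s : κ → ν → F) :
    (∀ i, ∑ j, A i j • s j = 0) ↔ ∀ k, A *ᵥ Function.swap s k = 0 := by
  simp only [funext_iff, mulVec, dotProduct, Finset.sum_apply, Pi.smul_apply, smul_eq_mul,
    Pi.zero_apply, Function.swap]
  exact forall_comm

def Matrix.solutionsEquiv (A : Matrix ι κ F) (ν : Type*) :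
    {s : κ → ν → F // ∀ i, ∑ j, A i j • s j = 0} ≃
      (ν → LinearMap.ker A.mulVecLin) where
  toFun s k := ⟨Function.swap s.1 k, (A.forall_sum_smul_eq_zero_iff s.1).1 s.2 k⟩
  invFun t := ⟨Function.swap fun k => (t k : κ → F),
    (A.forall_sum_smul_eq_zero_iff _).2 fun k => (t k).2⟩
  left_inv _ := rfl
  right_inv _ := rfl

lemma finrank_span_range_swap [Fintype ν] (s : κ → ν → F) :
    finrank F (span F (range (Function.swap s))) = finrank F (span F (range s)) :=
  (rank_eq_finrank_span_cols (of s)).symm.trans (rank_eq_finrank_span_row (of s))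

lemma Submodule.span_range_eq_top_iff_finrank_span_range_subtype {M : Type*} [AddCommGroup M]
    [Module F M] (K : Submodule F M) [FiniteDimensional F K] (t : ν → K) :
    span F (range t) = ⊤ ↔ finrank F (span F (range fun k => (t k : M))) = finrank F K := by
  rw [eq_top_iff_finrank_eq, ← finrank_map_subtype_eq, map_span, ← range_comp]
  rfl

lemma Matrix.finrank_span_range_eq_finrank_ker_iff [Fintype ν] (A : Matrix ι κ F)
    (s : {s : κ → ν → F // ∀ i, ∑ j, A i j • s j = 0}) :
    finrank F (span F (range s.1)) = finrank F (LinearMap.ker A.mulVecLin) ↔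
      span F (range (A.solutionsEquiv ν s)) = ⊤ := by
  rw [span_range_eq_top_iff_finrank_span_range_subtype, ← finrank_span_range_swap]
  rfl

end LinearSystems

theorem fully_dimensional_solutions_density_tendsto_one_general (F : Type*) [Field F] [Fintype F]
    (r m : ℕ) (A : Matrix (Fin r) (Fin m) F)
    (hA : A.rank = r) :
    Tendsto
      (fun n : ℕ =>
        (Nat.card {s : Fin m → (Fin n → F) //
            (∀ i, ∑ j, A i j • s j = 0) ∧
              Module.finrank F (Submodule.span F (Set.range s)) = m - r} : ℝ) /
          (Nat.card {s : Fin m → (Fin n → F) // ∀ i, ∑ j, A i j • s j = 0} : ℝ))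
      atTop (nhds 1) := by
  have hK : finrank F (LinearMap.ker A.mulVecLin) = m - r := by
    rw [A.finrank_ker_mulVecLin, Fintype.card_fin, hA]
  refine (tendsto_natCard_span_eq_top_div_natCard F (LinearMap.ker A.mulVecLin)).congr
    fun n => ?_
  rw [← Nat.card_congr (A.solutionsEquiv (Fin n))]
  congr 2
  refine Nat.card_congr ((Equiv.subtypeSubtypeEquivSubtypeInter _ _).symm.trans
    ((A.solutionsEquiv (Fin n)).subtypeEquiv fun s => ?_)).symm
  rw [← hK, A.finrank_span_range_eq_finrank_ker_iff]

/-- For a full-rank linear system over a finite field, asymptotically almost every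
solution in `Fⁿ` is fully dimensional, i.e. its entries span a subspace of the maximal
possible dimension `m − r`. -/
theorem fully_dimensional_solutions_density_tendsto_one (F : Type*) [Field F] [Fintype F]
    (r m : ℕ) (hr : 0 < r) (hrm : r ≤ m) (A : Matrix (Fin r) (Fin m) F)
    (hA : A.rank = r) :
    Tendsto
      (fun n : ℕ =>
        (Nat.card {s : Fin m → (Fin n → F) //
            (∀ i, ∑ j, A i j • s j = 0) ∧
              Module.finrank F (Submodule.span F (Set.range s)) = m - r} : ℝ) /
          (Nat.card {s : Fin m → (Fin n → F) // ∀ i, ∑ j, A i j • s j = 0} : ℝ))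
      atTop (nhds 1) :=
  fully_dimensional_solutions_density_tendsto_one_general F r m A hA
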